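/- arXiv:0710.1849 — 3 statements merged into one kernel-verified Lean document; each statement's English description precedes it below -/
import Mathlib

section
/- Define f(s) = ‖σ(s)‖². Then f is twice differentiable and for every s ∈ [0, L] its second derivative satisfies f''(s) ≥ 2 − β²·s². (Intermediate estimate in the proof of Lemma 3.4, using f''(s) = 2 + 2⟨σ''(s), σ(s) − s σ'(s)⟩ and the bound ‖σ(s) − sσ'(s)‖ ≤ βs²/2.) -/
/-!
Differentiating `‖σ‖²` twice gives `f'' = 2 ‖σ'‖² + 2 ⟪σ, σ''⟫ = 2 + 2 ⟪σ, σ''⟫`. Since `‖σ'‖ = 1`,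
`σ''` is orthogonal to `σ'`, so `⟪σ s, σ'' s⟫ = ⟪σ s - s • σ' s, σ'' s⟫`; and a Taylor expansion
of `σ` around the right endpoint `s` bounds `‖σ s - σ 0 - s • σ' s‖` by `β s² / 2`.
-/

open Set
open scoped RealInnerProductSpace

theorem norm_sub_sub_smul_deriv_le {F : Type*} [NormedAddCommGroup F] [NormedSpace ℝ F]
    {γ : ℝ → F} {a b C : ℝ} (hab : a ≤ b) (hγ : ∀ t ∈ Icc a b, DifferentiableAt ℝ γ t)
    (hγ' : ∀ t ∈ Icc a b, DifferentiableAt ℝ (deriv γ) t)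
    (hC : ∀ t ∈ Icc a b, ‖deriv (deriv γ) t‖ ≤ C) :
    ‖γ b - γ a - (b - a) • deriv γ b‖ ≤ C * (b - a) ^ 2 / 2 := by
  have hderiv_le : ∀ t ∈ Ico a b, ‖deriv γ t - deriv γ b‖ ≤ C * (b - t) := by
    intro t ht
    have hsub : Icc t b ⊆ Icc a b := Icc_subset_Icc_left ht.1
    rw [norm_sub_rev, ← Real.norm_of_nonneg (sub_nonneg.2 ht.2.le)]
    exact (convex_Icc t b).norm_image_sub_le_of_norm_hasDerivWithin_le
      (fun u hu => (hγ' u (hsub hu)).hasDerivAt.hasDerivWithinAt)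
      (fun u hu => hC u (hsub hu)) (left_mem_Icc.2 ht.2.le) (right_mem_Icc.2 ht.2.le)
  have hremainder : ∀ t ∈ Icc a b, HasDerivAt (fun u => γ u - γ a - (u - a) • deriv γ b)
      (deriv γ t - deriv γ b) t := by
    intro t ht
    simpa using ((hγ t ht).hasDerivAt.sub_const (γ a)).fun_sub
      (((hasDerivAt_id t).sub_const a).smul_const (deriv γ b))
  have hbound : ∀ t, HasDerivAt (fun u => C * ((b - a) ^ 2 - (b - u) ^ 2) / 2) (C * (b - t)) t :=
    fun t => by
      refine ((((hasDerivAt_id t).const_sub b).pow 2).const_sub ((b - a) ^ 2)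
        |>.const_mul C |>.div_const 2).congr_deriv ?_
      simp only [id, Nat.cast_ofNat]
      ring
  have := image_norm_le_of_norm_deriv_right_le_deriv_boundary
    (fun t ht => (hremainder t ht).continuousAt.continuousWithinAt)
    (fun t ht => (hremainder t (Ico_subset_Icc_self ht)).hasDerivWithinAt)
    (by simp) hbound hderiv_le (right_mem_Icc.2 hab)
  simpa using this

section UnitSpeed

variable {E : Type*} [NormedAddCommGroup E] [InnerProductSpace ℝ E] {γ : ℝ → E}

theorem inner_self_deriv_eq_zero_of_norm_eq {a b r t : ℝ} (hab : a < b)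
    (hnorm : ∀ u ∈ Icc a b, ‖γ u‖ = r) (ht : t ∈ Icc a b) (hγ : DifferentiableAt ℝ γ t) :
    ⟪γ t, deriv γ t⟫ = 0 := by
  have hsq : HasDerivWithinAt (‖γ ·‖ ^ 2) (2 * ⟪γ t, deriv γ t⟫) (Icc a b) t :=
    hγ.hasDerivAt.norm_sq.hasDerivWithinAt
  have hconst : HasDerivWithinAt (‖γ ·‖ ^ 2) 0 (Icc a b) t :=
    (hasDerivWithinAt_const t _ (r ^ 2)).congr (fun u hu => by simp only [hnorm u hu])
      (by simp only [hnorm t ht])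
  have := (uniqueDiffOn_Icc hab t ht).eq_deriv _ hsq hconst
  linarith

theorem hasDerivAt_deriv_norm_sq (hγ : Differentiable ℝ γ) (hγ' : Differentiable ℝ (deriv γ))
    (s : ℝ) : HasDerivAt (deriv fun t => ‖γ t‖ ^ 2)
      (2 * (‖deriv γ s‖ ^ 2 + ⟪γ s, deriv (deriv γ) s⟫)) s := by
  rw [show deriv (fun t => ‖γ t‖ ^ 2) = fun t => 2 * ⟪γ t, deriv γ t⟫ from
    funext fun t => (hγ t).hasDerivAt.norm_sq.deriv]
  refine (((hγ s).hasDerivAt.inner ℝ (hγ' s).hasDerivAt).const_mul 2).congr_deriv ?_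
  rw [real_inner_self_eq_norm_sq]
  ring

theorem neg_le_inner_self_deriv_deriv {s β : ℝ} (hs : 0 ≤ s) (hγ0 : γ 0 = 0)
    (hγ : Differentiable ℝ γ) (hγ' : Differentiable ℝ (deriv γ))
    (hunit : ∀ t ∈ Icc 0 s, ‖deriv γ t‖ = 1) (hcurv : ∀ t ∈ Icc 0 s, ‖deriv (deriv γ) t‖ ≤ β) :
    -(β ^ 2 * s ^ 2 / 2) ≤ ⟪γ s, deriv (deriv γ) s⟫ := by
  have hβ : 0 ≤ β := (norm_nonneg _).trans (hcurv s (right_mem_Icc.2 hs))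
  have htaylor : ‖γ s - s • deriv γ s‖ ≤ β * s ^ 2 / 2 := by
    simpa [hγ0] using norm_sub_sub_smul_deriv_le hs (fun t _ => hγ t) (fun t _ => hγ' t) hcurv
  have horth : s * ⟪deriv γ s, deriv (deriv γ) s⟫ = 0 := by
    rcases hs.eq_or_lt with rfl | hpos
    · exact zero_mul _
    · rw [inner_self_deriv_eq_zero_of_norm_eq hpos hunit (right_mem_Icc.2 hpos.le) (hγ' s),
        mul_zero]
  have hsplit : ⟪γ s, deriv (deriv γ) s⟫
      = ⟪γ s - s • deriv γ s, deriv (deriv γ) s⟫ + s * ⟪deriv γ s, deriv (deriv γ) s⟫ := by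
    rw [inner_sub_left, real_inner_smul_left]
    ring
  have hinner : |⟪γ s - s • deriv γ s, deriv (deriv γ) s⟫| ≤ β * s ^ 2 / 2 * β :=
    (abs_real_inner_le_norm _ _).trans <|
      mul_le_mul htaylor (hcurv s (right_mem_Icc.2 hs)) (norm_nonneg _) (by positivity)
  rw [hsplit, horth, add_zero]
  linarith [neg_abs_le ⟪γ s - s • deriv γ s, deriv (deriv γ) s⟫]

end UnitSpeed

theorem stmt_1_general (N : ℕ) (L β : ℝ)
    (σ : ℝ → EuclideanSpace ℝ (Fin N))
    (hσ : ContDiff ℝ 2 σ) (hσ0 : σ 0 = 0)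
    (hunit : ∀ s ∈ Set.Icc 0 L, ‖deriv σ s‖ = 1)
    (hcurv : ∀ s ∈ Set.Icc 0 L, ‖deriv (deriv σ) s‖ ≤ β)
    (f : ℝ → ℝ) (hf : f = fun s => ‖σ s‖ ^ 2) :
    Differentiable ℝ f ∧ Differentiable ℝ (deriv f) ∧
      ∀ s ∈ Set.Icc 0 L, 2 - β ^ 2 * s ^ 2 ≤ deriv (deriv f) s := by
  have hσ' : Differentiable ℝ σ := hσ.differentiable two_ne_zero
  have hσ'' : Differentiable ℝ (deriv σ) := hσ.differentiable_deriv_two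
  subst hf
  refine ⟨hσ'.norm_sq ℝ, fun s => (hasDerivAt_deriv_norm_sq hσ' hσ'' s).differentiableAt,
    fun s hs => ?_⟩
  have hIcc : Icc 0 s ⊆ Icc 0 L := Icc_subset_Icc_right hs.2
  have hlower := neg_le_inner_self_deriv_deriv hs.1 hσ0 hσ' hσ''
    (fun t ht => hunit t (hIcc ht)) (fun t ht => hcurv t (hIcc ht))
  rw [(hasDerivAt_deriv_norm_sq hσ' hσ'' s).deriv, hunit s hs]
  linarith

/-- Intermediate estimate in the proof of Lemma 3.4: with `f s = ‖σ s‖²`,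
the function `f` is twice differentiable and `f'' s ≥ 2 - β² s²` on `[0, L]`. -/
theorem stmt_1 (N : ℕ) (hN : 0 < N) (L β : ℝ) (hL : 0 < L) (hβ : 0 ≤ β)
    (σ : ℝ → EuclideanSpace ℝ (Fin N))
    (hσ : ContDiff ℝ 2 σ) (hσ0 : σ 0 = 0)
    (hunit : ∀ s ∈ Set.Icc 0 L, ‖deriv σ s‖ = 1)
    (hcurv : ∀ s ∈ Set.Icc 0 L, ‖deriv (deriv σ) s‖ ≤ β)
    (f : ℝ → ℝ) (hf : f = fun s => ‖σ s‖ ^ 2) :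
    Differentiable ℝ f ∧ Differentiable ℝ (deriv f) ∧
      ∀ s ∈ Set.Icc 0 L, 2 - β ^ 2 * s ^ 2 ≤ deriv (deriv f) s :=
  stmt_1_general N L β σ hσ hσ0 hunit hcurv f hf
end

section
/- For every s ∈ [0, L] one has ‖σ(s)‖² ≥ s² − (β²/12)·s⁴. In particular, the extrinsic (Euclidean) distance from σ(0) to σ(s) is bounded below in terms of the arc length s and the curvature bound β. -/
/-!
Write `T = σ'` and `A = σ''`. Differentiating `‖T‖² = 1` gives `⟪T s, A s⟫ = 0`, so
`⟪T t, A s⟫ = ⟪T t - T s, A s⟫ ≥ -β² |t - s|` because `T` is `β`-Lipschitz. Integrating this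
bound in `t` over `[0, s]` gives `⟪σ s, A s⟫ ≥ -β² s² / 2`. Since `(⟪σ, T⟫)' = ⟪σ, A⟫ + 1`,
another integration gives `⟪σ s, T s⟫ ≥ s - β² s³ / 6`, and since `(‖σ‖²)' = 2 ⟪σ, T⟫`, a last
one gives `‖σ s‖² ≥ s² - β² s⁴ / 12`.
-/

open Set
open scoped RealInnerProductSpace

theorem image_le_of_hasDerivAt_le_boundary {f f' B B' : ℝ → ℝ} {a b : ℝ}
    (hf : ∀ x ∈ Icc a b, HasDerivAt f (f' x) x) (hB : ∀ x ∈ Icc a b, HasDerivAt B (B' x) x)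
    (ha : f a ≤ B a) (bound : ∀ x ∈ Ico a b, f' x ≤ B' x) : ∀ ⦃x⦄, x ∈ Icc a b → f x ≤ B x :=
  image_le_of_deriv_right_le_deriv_boundary
    (fun x hx => (hf x hx).continuousAt.continuousWithinAt)
    (fun x hx => (hf x (Ico_subset_Icc_self hx)).hasDerivWithinAt) ha
    (fun x hx => (hB x hx).continuousAt.continuousWithinAt)
    (fun x hx => (hB x (Ico_subset_Icc_self hx)).hasDerivWithinAt) bound

section Curve

variable {E : Type*} [NormedAddCommGroup E] [InnerProductSpace ℝ E]

theorem neg_norm_sub_mul_norm_le_inner {u w n : E} (h : ⟪w, n⟫ = 0) :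
    -(‖u - w‖ * ‖n‖) ≤ ⟪u, n⟫ := by
  have : ⟪u, n⟫ = ⟪u - w, n⟫ := by rw [inner_sub_left, h, sub_zero]
  rw [this]
  exact neg_le_of_abs_le (abs_real_inner_le_norm _ _)

theorem HasDerivWithinAt.inner_eq_zero_of_norm_const {T : ℝ → E} {T' : E} {S : Set ℝ}
    {x c : ℝ} (hT : HasDerivWithinAt T T' S x) (hS : UniqueDiffWithinAt ℝ S x) (hx : x ∈ S)
    (hc : ∀ t ∈ S, ‖T t‖ = c) : ⟪T x, T'⟫ = 0 := by
  have hconst : HasDerivWithinAt (fun t => ⟪T t, T t⟫) 0 S x :=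
    (hasDerivWithinAt_const x S (c ^ 2)).congr
      (fun t ht => by rw [real_inner_self_eq_norm_sq, hc t ht])
      (by rw [real_inner_self_eq_norm_sq, hc x hx])
  have h := hS.eq_deriv S (hT.inner ℝ hT) hconst
  rw [real_inner_comm (T x) T'] at h
  linarith

variable {σ T A : ℝ → E} {L β : ℝ}

theorem le_inner_velocity_acceleration (hT : ∀ t ∈ Icc 0 L, HasDerivAt T (A t) t)
    (hunit : ∀ t ∈ Icc 0 L, ‖T t‖ = 1) (hA : ∀ t ∈ Icc 0 L, ‖A t‖ ≤ β)
    {s t : ℝ} (hs : s ∈ Ico 0 L) (ht : t ∈ Icc 0 L) :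
    -(β ^ 2 * |t - s|) ≤ ⟪T t, A s⟫ := by
  have hs' : s ∈ Icc 0 L := Ico_subset_Icc_self hs
  have horth : ⟪T s, A s⟫ = 0 :=
    (hT s hs').hasDerivWithinAt.inner_eq_zero_of_norm_const
      (uniqueDiffOn_Icc (hs.1.trans_lt hs.2) s hs') hs' hunit
  have hlip : ‖T t - T s‖ ≤ β * ‖t - s‖ :=
    (convex_Icc 0 L).norm_image_sub_le_of_norm_hasDerivWithin_le
      (fun x hx => (hT x hx).hasDerivWithinAt) hA hs' ht
  rw [Real.norm_eq_abs] at hlip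
  calc -(β ^ 2 * |t - s|) = -(β * |t - s| * β) := by ring
    _ ≤ -(‖T t - T s‖ * ‖A s‖) :=
        neg_le_neg (mul_le_mul hlip (hA s hs') (norm_nonneg _) ((norm_nonneg _).trans hlip))
    _ ≤ ⟪T t, A s⟫ := neg_norm_sub_mul_norm_le_inner horth

theorem le_inner_position_acceleration (hσ : ∀ t ∈ Icc 0 L, HasDerivAt σ (T t) t)
    (hT : ∀ t ∈ Icc 0 L, HasDerivAt T (A t) t) (hσ0 : σ 0 = 0)
    (hunit : ∀ t ∈ Icc 0 L, ‖T t‖ = 1) (hA : ∀ t ∈ Icc 0 L, ‖A t‖ ≤ β)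
    {s : ℝ} (hs : s ∈ Ico 0 L) : -(β ^ 2 * s ^ 2 / 2) ≤ ⟪σ s, A s⟫ := by
  have hsub : Icc 0 s ⊆ Icc 0 L := Icc_subset_Icc_right hs.2.le
  have hpoly (t : ℝ) :
      HasDerivAt (fun t => -(β ^ 2 * (s * t - t ^ 2 / 2))) (-(β ^ 2 * (s - t))) t :=
    ((((hasDerivAt_id' t).const_mul s).fun_sub ((hasDerivAt_pow 2 t).div_const 2)).const_mul
      (β ^ 2)).fun_neg.congr_deriv (by norm_num)
  have hinner (t : ℝ) (ht : t ∈ Icc 0 s) : HasDerivAt (fun t => ⟪σ t, A s⟫) ⟪T t, A s⟫ t := by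
    simpa using (hσ t (hsub ht)).inner ℝ (hasDerivAt_const t (A s))
  have hbound (t : ℝ) (ht : t ∈ Ico 0 s) : -(β ^ 2 * (s - t)) ≤ ⟪T t, A s⟫ := by
    have := le_inner_velocity_acceleration hT hunit hA hs (hsub (Ico_subset_Icc_self ht))
    rwa [abs_of_nonpos (by linarith [ht.2]), neg_sub] at this
  have := image_le_of_hasDerivAt_le_boundary (fun t _ => hpoly t) hinner (by simp [hσ0]) hbound
    (right_mem_Icc.2 hs.1)
  convert this using 1
  ring

theorem le_inner_position_velocity (hσ : ∀ t ∈ Icc 0 L, HasDerivAt σ (T t) t)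
    (hT : ∀ t ∈ Icc 0 L, HasDerivAt T (A t) t) (hσ0 : σ 0 = 0)
    (hunit : ∀ t ∈ Icc 0 L, ‖T t‖ = 1) (hA : ∀ t ∈ Icc 0 L, ‖A t‖ ≤ β)
    {s : ℝ} (hs : s ∈ Icc 0 L) : s - β ^ 2 * s ^ 3 / 6 ≤ ⟪σ s, T s⟫ := by
  have hsub : Icc 0 s ⊆ Icc 0 L := Icc_subset_Icc_right hs.2
  have hpoly (t : ℝ) : HasDerivAt (fun t => t - β ^ 2 * t ^ 3 / 6) (1 - β ^ 2 * t ^ 2 / 2) t :=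
    ((hasDerivAt_id' t).fun_sub (((hasDerivAt_pow 3 t).const_mul (β ^ 2)).div_const 6)).congr_deriv
      (by norm_num; ring)
  have hinner (t : ℝ) (ht : t ∈ Icc 0 s) :
      HasDerivAt (fun t => ⟪σ t, T t⟫) (⟪σ t, A t⟫ + ⟪T t, T t⟫) t :=
    (hσ t (hsub ht)).inner ℝ (hT t (hsub ht))
  have hbound (t : ℝ) (ht : t ∈ Ico 0 s) :
      1 - β ^ 2 * t ^ 2 / 2 ≤ ⟪σ t, A t⟫ + ⟪T t, T t⟫ := by
    have htL : t ∈ Ico 0 L := ⟨ht.1, ht.2.trans_le hs.2⟩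
    rw [real_inner_self_eq_norm_sq, hunit t (Ico_subset_Icc_self htL)]
    linarith [le_inner_position_acceleration hσ hT hσ0 hunit hA htL]
  simpa using image_le_of_hasDerivAt_le_boundary (fun t _ => hpoly t) hinner
    (by simp [hσ0]) hbound (right_mem_Icc.2 hs.1)

theorem le_norm_position_sq (hσ : ∀ t ∈ Icc 0 L, HasDerivAt σ (T t) t)
    (hT : ∀ t ∈ Icc 0 L, HasDerivAt T (A t) t) (hσ0 : σ 0 = 0)
    (hunit : ∀ t ∈ Icc 0 L, ‖T t‖ = 1) (hA : ∀ t ∈ Icc 0 L, ‖A t‖ ≤ β)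
    {s : ℝ} (hs : s ∈ Icc 0 L) : s ^ 2 - β ^ 2 / 12 * s ^ 4 ≤ ‖σ s‖ ^ 2 := by
  have hsub : Icc 0 s ⊆ Icc 0 L := Icc_subset_Icc_right hs.2
  have hpoly (t : ℝ) :
      HasDerivAt (fun t => t ^ 2 - β ^ 2 / 12 * t ^ 4) (2 * (t - β ^ 2 * t ^ 3 / 6)) t :=
    ((hasDerivAt_pow 2 t).fun_sub ((hasDerivAt_pow 4 t).const_mul (β ^ 2 / 12))).congr_deriv
      (by norm_num; ring)
  have hbound (t : ℝ) (ht : t ∈ Ico 0 s) :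
      2 * (t - β ^ 2 * t ^ 3 / 6) ≤ 2 * ⟪σ t, T t⟫ := by
    have htL : t ∈ Icc 0 L := hsub (Ico_subset_Icc_self ht)
    linarith [le_inner_position_velocity hσ hT hσ0 hunit hA htL]
  simpa using image_le_of_hasDerivAt_le_boundary (fun t _ => hpoly t)
    (fun t ht => (hσ t (hsub ht)).norm_sq) (by simp [hσ0]) hbound (right_mem_Icc.2 hs.1)

end Curve

theorem stmt_3_general (N : ℕ) (L β : ℝ)
    (σ : ℝ → EuclideanSpace ℝ (Fin N))
    (hσ : ContDiff ℝ 2 σ) (hσ0 : σ 0 = 0)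
    (hunit : ∀ s ∈ Set.Icc 0 L, ‖deriv σ s‖ = 1)
    (hcurv : ∀ s ∈ Set.Icc 0 L, ‖deriv (deriv σ) s‖ ≤ β) :
    ∀ s ∈ Set.Icc 0 L, s ^ 2 - β ^ 2 / 12 * s ^ 4 ≤ ‖σ s‖ ^ 2 := by
  have hσ' : Differentiable ℝ σ := hσ.differentiable (by norm_num)
  have hT' : Differentiable ℝ (deriv σ) :=
    (hσ.deriv' (n := 1)).differentiable (by norm_num)
  exact fun s hs => le_norm_position_sq (fun t _ => (hσ' t).hasDerivAt)
    (fun t _ => (hT' t).hasDerivAt) hσ0 hunit hcurv hs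

/-- Lemma 3.4, lower bound on the extrinsic distance: `‖σ s‖² ≥ s² - (β²/12) s⁴`
for a unit-speed `C²` curve `σ` with `σ 0 = 0` and `‖σ''‖ ≤ β` on `[0, L]`. -/
theorem stmt_3 (N : ℕ) (hN : 0 < N) (L β : ℝ) (hL : 0 < L) (hβ : 0 ≤ β)
    (σ : ℝ → EuclideanSpace ℝ (Fin N))
    (hσ : ContDiff ℝ 2 σ) (hσ0 : σ 0 = 0)
    (hunit : ∀ s ∈ Set.Icc 0 L, ‖deriv σ s‖ = 1)
    (hcurv : ∀ s ∈ Set.Icc 0 L, ‖deriv (deriv σ) s‖ ≤ β) :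
    ∀ s ∈ Set.Icc 0 L, s ^ 2 - β ^ 2 / 12 * s ^ 4 ≤ ‖σ s‖ ^ 2 :=
  stmt_3_general N L β σ hσ hσ0 hunit hcurv
end

section
/- (Lemma 3.4, comparison of intrinsic and extrinsic distance.) Set R = ‖σ(L)‖ (the Euclidean distance between the endpoints of the curve) and assume in addition that β·L ≤ 1. Then the arc length L satisfies L ≤ R·(1 + (β²/12)·R²). In other words, on a submanifold of ℝ^N with second fundamental form bounded by β, the geodesic distance R̃ between two points and their Euclidean distance R satisfy R̃ ≤ R(1 + δR²) with δ = β²/12 depending only on β, provided βR̃ ≤ 1. -/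
/-!
Write `f = σ'`, a unit vector field with `‖f s - f t‖ ≤ β |s - t|`, so that
`⟪f s, f t⟫ ≥ 1 - β² (s - t)² / 2`. Since `σ L = ∫₀ᴸ f`, integrating this bound over the square
gives `R² = ∫∫ ⟪f s, f t⟫ ≥ L² - β² L⁴ / 12`; when `β L ≤ 1` this forces `R ≥ (11/12) L`, and an
elementary estimate turns the lower bound on `R²` into `L ≤ R (1 + β² R² / 12)`.
-/

open intervalIntegral Set
open scoped RealInnerProductSpace

section InnerProductSpace

variable {E : Type*} [NormedAddCommGroup E] [InnerProductSpace ℝ E]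

theorem one_sub_sq_div_two_le_inner {u v : E} {c : ℝ} (hu : ‖u‖ = 1) (hv : ‖v‖ = 1)
    (h : ‖u - v‖ ≤ c) : 1 - c ^ 2 / 2 ≤ ⟪u, v⟫ := by
  have := norm_sub_sq_real u v
  rw [hu, hv] at this
  nlinarith [norm_nonneg (u - v)]

variable [CompleteSpace E]

theorem inner_intervalIntegral {f : ℝ → E} {a b : ℝ} (hf : IntervalIntegrable f MeasureTheory.volume a b)
    (c : E) : ⟪c, ∫ x in a..b, f x⟫ = ∫ x in a..b, ⟪c, f x⟫ := by
  simpa only [innerSL_apply_apply] using ((innerSL ℝ c).intervalIntegral_comp_comm hf).symm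

theorem integral_integral_one_sub_sq (L β : ℝ) :
    ∫ t in (0 : ℝ)..L, ∫ s in (0 : ℝ)..L, (1 - β ^ 2 * (s - t) ^ 2 / 2) =
      L ^ 2 - β ^ 2 * L ^ 4 / 12 := by
  have integral_s (t : ℝ) : ∫ s in (0 : ℝ)..L, (1 - β ^ 2 * (s - t) ^ 2 / 2) =
      L - β ^ 2 * ((L - t) ^ 3 + t ^ 3) / 6 := by
    rw [integral_sub intervalIntegrable_const (Continuous.intervalIntegrable (by fun_prop) _ _),
      integral_div, integral_const_mul, integral_comp_sub_right (fun x => x ^ 2), integral_pow]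
    simp only [integral_const, sub_zero, smul_eq_mul, mul_one, zero_sub, Nat.cast_ofNat]
    ring
  simp_rw [integral_s]
  rw [integral_sub intervalIntegrable_const (Continuous.intervalIntegrable (by fun_prop) _ _),
    integral_div, integral_const_mul, integral_add (Continuous.intervalIntegrable (by fun_prop) _ _)
      (Continuous.intervalIntegrable (by fun_prop) _ _),
    integral_comp_sub_left (fun x => x ^ 3)]
  simp only [integral_const, integral_pow, sub_zero, smul_eq_mul, sub_self, Nat.cast_ofNat]
  ring

theorem sq_sub_le_sq_norm_integral_of_norm_eq_one {f : ℝ → E} {L β : ℝ} (hL : 0 ≤ L)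
    (hf : ContinuousOn f (Icc 0 L)) (hunit : ∀ s ∈ Icc 0 L, ‖f s‖ = 1)
    (hlip : ∀ s ∈ Icc 0 L, ∀ t ∈ Icc 0 L, ‖f s - f t‖ ≤ β * |s - t|) :
    L ^ 2 - β ^ 2 * L ^ 4 / 12 ≤ ‖∫ s in (0 : ℝ)..L, f s‖ ^ 2 := by
  have hfi : IntervalIntegrable f MeasureTheory.volume 0 L := hf.intervalIntegrable_of_Icc hL
  have inner_lower (s t : ℝ) (hs : s ∈ Icc 0 L) (ht : t ∈ Icc 0 L) :
      1 - β ^ 2 * (s - t) ^ 2 / 2 ≤ ⟪f s, f t⟫ := by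
    have := one_sub_sq_div_two_le_inner (hunit s hs) (hunit t ht) (hlip s hs t ht)
    rwa [mul_pow, sq_abs] at this
  rw [← integral_integral_one_sub_sq, ← real_inner_self_eq_norm_sq,
    inner_intervalIntegral hfi]
  refine integral_mono_on hL (Continuous.intervalIntegrable (by fun_prop) _ _)
    ((continuousOn_const.inner hf).intervalIntegrable_of_Icc hL) fun t ht => ?_
  rw [real_inner_comm, inner_intervalIntegral hfi]
  refine integral_mono_on hL (Continuous.intervalIntegrable (by fun_prop) _ _)
    ((continuousOn_const.inner hf).intervalIntegrable_of_Icc hL) fun s hs => ?_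
  rw [real_inner_comm]
  exact inner_lower s t hs ht

end InnerProductSpace

theorem le_mul_one_add_of_sq_sub_le_sq {L β R : ℝ} (hL : 0 < L) (hβ : 0 ≤ β) (hβL : β * L ≤ 1)
    (hR : 0 ≤ R) (h : L ^ 2 - β ^ 2 * L ^ 4 / 12 ≤ R ^ 2) :
    L ≤ R * (1 + β ^ 2 / 12 * R ^ 2) := by
  have hβL2 : β ^ 2 * L ^ 2 ≤ 1 := by nlinarith [mul_nonneg hβ hL.le]
  have hRL2 : 11 / 12 * L ^ 2 ≤ R ^ 2 := by nlinarith
  have hRL : 11 / 12 * L ≤ R := by nlinarith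
  have quartic : L ^ 4 ≤ R ^ 3 * (L + R) := by
    nlinarith [mul_le_mul hRL2 (mul_le_mul_of_nonneg_right hRL hL.le) (by positivity) (sq_nonneg R)]
  have hLR : 0 < L + R := by linarith
  have : (L - R) * (L + R) ≤ β ^ 2 * R ^ 3 / 12 * (L + R) := by
    nlinarith [mul_le_mul_of_nonneg_left quartic (sq_nonneg β)]
  nlinarith [le_of_mul_le_mul_right this hLR]

theorem stmt_4_general (N : ℕ) (L β : ℝ) (hL : 0 < L) (hβ : 0 ≤ β)
    (σ : ℝ → EuclideanSpace ℝ (Fin N))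
    (hσ : ContDiff ℝ 2 σ) (hσ0 : σ 0 = 0)
    (hunit : ∀ s ∈ Set.Icc 0 L, ‖deriv σ s‖ = 1)
    (hcurv : ∀ s ∈ Set.Icc 0 L, ‖deriv (deriv σ) s‖ ≤ β)
    (hβL : β * L ≤ 1) (R : ℝ) (hR : R = ‖σ L‖) :
    L ≤ R * (1 + β ^ 2 / 12 * R ^ 2) := by
  have hσ' : ContDiff ℝ 1 (deriv σ) := hσ.iterate_deriv' 1 1
  have hσL : σ L = ∫ s in (0 : ℝ)..L, deriv σ s := by
    rw [integral_deriv_eq_sub (fun x _ => (hσ.differentiable two_ne_zero).differentiableAt)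
      (hσ'.continuous.intervalIntegrable 0 L), hσ0, sub_zero]
  have hlip : ∀ s ∈ Icc 0 L, ∀ t ∈ Icc 0 L, ‖deriv σ s - deriv σ t‖ ≤ β * |s - t| :=
    fun s hs t ht => (convex_Icc 0 L).norm_image_sub_le_of_norm_deriv_le
      (fun x _ => (hσ'.differentiable one_ne_zero).differentiableAt) hcurv ht hs
  have hR2 := sq_sub_le_sq_norm_integral_of_norm_eq_one hL.le hσ'.continuous.continuousOn hunit hlip
  rw [← hσL, ← hR] at hR2
  exact le_mul_one_add_of_sq_sub_le_sq hL hβ hβL (hR ▸ norm_nonneg _) hR2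

/-- Lemma 3.4 (comparison of intrinsic and extrinsic distance): if `R = ‖σ L‖` is the
Euclidean distance between the endpoints of a unit-speed `C²` curve `σ` of length `L`
with `‖σ''‖ ≤ β` and `β L ≤ 1`, then `L ≤ R (1 + (β²/12) R²)`. -/
theorem stmt_4 (N : ℕ) (hN : 0 < N) (L β : ℝ) (hL : 0 < L) (hβ : 0 ≤ β)
    (σ : ℝ → EuclideanSpace ℝ (Fin N))
    (hσ : ContDiff ℝ 2 σ) (hσ0 : σ 0 = 0)
    (hunit : ∀ s ∈ Set.Icc 0 L, ‖deriv σ s‖ = 1)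
    (hcurv : ∀ s ∈ Set.Icc 0 L, ‖deriv (deriv σ) s‖ ≤ β)
    (hβL : β * L ≤ 1) (R : ℝ) (hR : R = ‖σ L‖) :
    L ≤ R * (1 + β ^ 2 / 12 * R ^ 2) :=
  stmt_4_general N L β hL hβ σ hσ hσ0 hunit hcurv hβL R hR
end
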